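/- Virial theorem for bounded solutions: let q(t) be a solution of Newton's N-body equations defined for all t ∈ ℝ with sup_{t ∈ ℝ} I(t) < ∞. Then the time averages ⟨K⟩ = lim_{T→∞} (1/(2T))∫_{−T}^{T} K(t) dt and ⟨U⟩ = lim_{T→∞} (1/(2T))∫_{−T}^{T} U(q(t)) dt exist, satisfy 2⟨K⟩ = ⟨U⟩ = −2E, and the total energy E is strictly negative. -/

import Mathlib

/-!
The Lagrange–Jacobi identity `Ï = 4K - 2U = 2K + 2E` follows from Euler's identity
`∑ₐ ⟪qₐ, Fₐ⟫ = -U` for the homogeneous Newtonian force. Since `I` is bounded and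
`Ï ≥ 2E`, the mean value theorem bounds `İ`, so the time average of `Ï` over `[-T, T]`,
which is `(İ(T) - İ(-T)) / (2T)`, tends to `0`: hence `⟨K⟩ = -E` and `⟨U⟩ = ⟨K⟩ - E = -2E`.
Bounded `I` also confines the bodies to a ball, so `U` stays above a positive constant,
which forces `-2E = ⟨U⟩ > 0`.
-/

open Finset Filter MeasureTheory
open scoped RealInnerProductSpace

noncomputable section

/-- Configuration space of `N` bodies in `ℝ³`. -/
abbrev Config (N : ℕ) := Fin N → EuclideanSpace ℝ (Fin 3)

/-- A configuration is collision-free if all bodies occupy distinct positions. -/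
def CollisionFree {N : ℕ} (q : Config N) : Prop :=
  ∀ a b : Fin N, a ≠ b → q a ≠ q b

/-- The Newtonian potential `U(q) = G ∑_{a<b} m_a m_b / |q_a - q_b|`. -/
def potU {N : ℕ} (G : ℝ) (m : Fin N → ℝ) (q : Config N) : ℝ :=
  G * ∑ a : Fin N, ∑ b : Fin N, if a < b then m a * m b / ‖q a - q b‖ else 0

/-- Kinetic energy `K = (1/2) ∑_a m_a |v_a|²`. -/
def kinE {N : ℕ} (m : Fin N → ℝ) (v : Config N) : ℝ :=
  (1 / 2) * ∑ a : Fin N, m a * ‖v a‖ ^ 2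

/-- Moment of inertia `I = ∑_a m_a |q_a|²`. -/
def momI {N : ℕ} (m : Fin N → ℝ) (q : Config N) : ℝ :=
  ∑ a : Fin N, m a * ‖q a‖ ^ 2

/-- `q, v : ℝ → Config N` is a solution of Newton's N-body equations on `J`:
at each time in `J` the configuration is collision-free, `v` is the derivative
of `q`, and the acceleration satisfies
`m_a q̈_a = G ∑_{b ≠ a} m_a m_b (q_b - q_a)/|q_b - q_a|³`. -/
def IsSolutionOn {N : ℕ} (G : ℝ) (m : Fin N → ℝ) (J : Set ℝ)
    (q v : ℝ → Config N) : Prop :=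
  ∀ t ∈ J,
    CollisionFree (q t) ∧
    (∀ a, HasDerivAt (fun s => q s a) (v t a) t) ∧
    (∀ a, ∃ acc : EuclideanSpace ℝ (Fin 3),
      HasDerivAt (fun s => v s a) acc t ∧
      m a • acc = ∑ b ∈ univ.filter (fun b => b ≠ a),
        (G * m a * m b / ‖q t b - q t a‖ ^ 3) • (q t b - q t a))

open Topology

def timeAverage (f : ℝ → ℝ) (T : ℝ) : ℝ := (1 / (2 * T)) * ∫ t in (-T)..T, f t

theorem timeAverage_add_const {f : ℝ → ℝ} (hf : Continuous f) (c : ℝ) {T : ℝ} (hT : T ≠ 0) :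
    timeAverage (fun t => f t + c) T = timeAverage f T + c := by
  rw [timeAverage, timeAverage, intervalIntegral.integral_add (hf.intervalIntegrable _ _)
    intervalIntegrable_const, intervalIntegral.integral_const, smul_eq_mul]
  field_simp
  ring

theorem Filter.Tendsto.timeAverage_add_const {f : ℝ → ℝ} {l : ℝ}
    (h : Tendsto (timeAverage f) atTop (𝓝 l)) (hf : Continuous f) (c : ℝ) :
    Tendsto (timeAverage fun t => f t + c) atTop (𝓝 (l + c)) := by
  refine (h.add_const c).congr' ?_
  filter_upwards [eventually_ne_atTop 0] with T hT
  rw [_root_.timeAverage_add_const hf c hT]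

theorem le_timeAverage {f : ℝ → ℝ} (hf : Continuous f) {c : ℝ} (hc : ∀ t, c ≤ f t) {T : ℝ}
    (hT : 0 < T) : c ≤ timeAverage f T := by
  have hint := intervalIntegral.integral_mono_on (μ := volume) (by linarith)
    intervalIntegrable_const (hf.intervalIntegrable (-T) T) fun t _ => hc t
  rw [intervalIntegral.integral_const, smul_eq_mul] at hint
  calc c = (1 / (2 * T)) * ((T - -T) * c) := by field_simp; ring
    _ ≤ timeAverage f T := by unfold timeAverage; gcongr

theorem tendsto_timeAverage_of_hasDerivAt {f g : ℝ → ℝ} {B : ℝ} (hf : ∀ t, HasDerivAt f (g t) t)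
    (hg : Continuous g) (hB : ∀ t, |f t| ≤ B) : Tendsto (timeAverage g) atTop (𝓝 0) := by
  have hB' : Tendsto (fun T : ℝ => B / T) atTop (𝓝 0) := tendsto_const_nhds.div_atTop tendsto_id
  refine squeeze_zero_norm' ?_ hB'
  filter_upwards [eventually_gt_atTop 0] with T hT
  rw [timeAverage, intervalIntegral.integral_eq_sub_of_hasDerivAt (fun t _ => hf t)
    (hg.intervalIntegrable _ _), Real.norm_eq_abs, abs_mul, abs_of_pos (by positivity),
    div_mul_eq_mul_div, one_mul, div_le_div_iff₀ (by positivity) hT]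
  nlinarith [abs_sub (f T) (f (-T)), hB T, hB (-T)]

theorem abs_le_of_hasDerivAt_of_mem_Icc {f g h : ℝ → ℝ} {L M c : ℝ} (hc : 0 ≤ c)
    (hf : ∀ t, HasDerivAt f (g t) t) (hg : ∀ t, HasDerivAt g (h t) t) (hh : ∀ t, -c ≤ h t)
    (hfLM : ∀ t, f t ∈ Set.Icc L M) (t : ℝ) : |g t| ≤ M - L + c := by
  have hgrow : ∀ ⦃s u⦄, s ≤ u → -c * (u - s) ≤ g u - g s :=
    mul_sub_le_image_sub_of_le_deriv (fun s => (hg s).differentiableAt)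
      fun s => (hg s).deriv ▸ hh s
  have hslope : ∀ s, ∃ ξ ∈ Set.Ioo s (s + 1), g ξ = f (s + 1) - f s := fun s => by
    simpa using exists_hasDerivAt_eq_slope f g (lt_add_one s)
      (continuous_iff_continuousAt.2 fun x => (hf x).continuousAt).continuousOn
      fun x _ => hf x
  obtain ⟨ξ, ⟨hξ₀, hξ₁⟩, hgξ⟩ := hslope t
  obtain ⟨η, ⟨hη₀, hη₁⟩, hgη⟩ := hslope (t - 1)
  rw [sub_add_cancel] at hη₁ hgη
  have hgξt := hgrow hξ₀.le
  have hgtη := hgrow hη₁.le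
  obtain ⟨hL₁, hM₁⟩ := hfLM (t + 1)
  obtain ⟨hL, hM⟩ := hfLM t
  obtain ⟨hL₂, hM₂⟩ := hfLM (t - 1)
  rw [abs_le]
  constructor <;> nlinarith

theorem sum_sum_ite_lt_eq_half {ι : Type*} [Fintype ι] [LinearOrder ι] (f : ι → ι → ℝ)
    (hsymm : ∀ a b, f a b = f b a) (hdiag : ∀ a, f a a = 0) :
    ∑ a, ∑ b, (if a < b then f a b else 0) = (1 / 2) * ∑ a, ∑ b, f a b := by
  have hsplit : ∀ a b, f a b = (if a < b then f a b else 0) + (if b < a then f b a else 0) := by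
    intro a b
    rcases lt_trichotomy a b with h | rfl | h
    · simp [h, h.not_gt]
    · simp [hdiag]
    · simp [h, h.not_gt, hsymm a b]
  rw [show ∑ a, ∑ b, f a b = _ from sum_congr rfl fun a _ => sum_congr rfl fun b _ => hsplit a b]
  simp only [sum_add_distrib]
  rw [sum_comm (f := fun a b => if b < a then f b a else 0)]
  ring

-- At `x = y` both sides are `0`, as `c / 0 = 0`.
theorem div_norm_pow_three_mul_inner_add {F : Type*} [NormedAddCommGroup F] [InnerProductSpace ℝ F]
    (x y : F) (c : ℝ) :
    c / ‖y - x‖ ^ 3 * ⟪x, y - x⟫ + c / ‖x - y‖ ^ 3 * ⟪y, x - y⟫ = -(c / ‖x - y‖) := by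
  obtain rfl | hxy := eq_or_ne x y
  · simp
  have hr : ‖x - y‖ ≠ 0 := norm_ne_zero_iff.2 (sub_ne_zero.2 hxy)
  have hinner : ⟪x, y - x⟫ + ⟪y, x - y⟫ = -‖x - y‖ ^ 2 := by
    rw [← real_inner_self_eq_norm_sq]
    simp only [inner_sub_left, inner_sub_right, real_inner_comm x y]
    ring
  rw [norm_sub_rev y x, ← mul_add, hinner]
  field_simp

theorem potU_eq_half_sum {N : ℕ} (G : ℝ) (m : Fin N → ℝ) (q : Config N) :
    potU G m q = (1 / 2) * ∑ a, ∑ b, G * m a * m b / ‖q a - q b‖ := by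
  rw [potU, sum_sum_ite_lt_eq_half _ (fun a b => by rw [mul_comm, norm_sub_rev]) (by simp)]
  simp only [mul_sum]
  ring_nf

def newtonForce {N : ℕ} (G : ℝ) (m : Fin N → ℝ) (q : Config N) (a : Fin N) :
    EuclideanSpace ℝ (Fin 3) :=
  ∑ b ∈ univ.filter (fun b => b ≠ a), (G * m a * m b / ‖q b - q a‖ ^ 3) • (q b - q a)

theorem newtonForce_eq_sum {N : ℕ} (G : ℝ) (m : Fin N → ℝ) (q : Config N) (a : Fin N) :
    newtonForce G m q a = ∑ b, (G * m a * m b / ‖q b - q a‖ ^ 3) • (q b - q a) :=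
  sum_filter_of_ne fun b _ hb => by rintro rfl; simp at hb

theorem sum_inner_newtonForce {N : ℕ} (G : ℝ) (m : Fin N → ℝ) (q : Config N) :
    ∑ a, ⟪q a, newtonForce G m q a⟫ = -potU G m q := by
  have hpair : ∀ a b, G * m a * m b / ‖q b - q a‖ ^ 3 * ⟪q a, q b - q a⟫
      + G * m b * m a / ‖q a - q b‖ ^ 3 * ⟪q b, q a - q b⟫ = -(G * m a * m b / ‖q a - q b‖) :=
    fun a b => by
      rw [mul_right_comm G (m b)]
      exact div_norm_pow_three_mul_inner_add _ _ _
  have hsum := sum_congr rfl fun a (_ : a ∈ univ) => sum_congr rfl fun b (_ : b ∈ univ) =>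
    hpair a b
  simp only [sum_add_distrib, sum_neg_distrib] at hsum
  rw [sum_comm (f := fun a b => G * m b * m a / ‖q a - q b‖ ^ 3 * ⟪q b, q a - q b⟫)] at hsum
  simp only [newtonForce_eq_sum, inner_sum, real_inner_smul_right, potU_eq_half_sum]
  linarith

theorem hasDerivAt_momI {N : ℕ} (m : Fin N → ℝ) {q : ℝ → Config N} {v : Config N} {t : ℝ}
    (hq : ∀ a, HasDerivAt (fun s => q s a) (v a) t) :
    HasDerivAt (fun s => momI m (q s)) (2 * ∑ a, m a * ⟪q t a, v a⟫) t := by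
  simp only [momI, mul_sum]
  exact HasDerivAt.fun_sum fun a _ => ((hq a).norm_sq.const_mul (m a)).congr_deriv (by ring)

theorem IsSolutionOn.hasDerivAt_sum_mul_inner {N : ℕ} {G : ℝ} {m : Fin N → ℝ} {J : Set ℝ}
    {q v : ℝ → Config N} (hsol : IsSolutionOn G m J q v) {t : ℝ} (ht : t ∈ J) :
    HasDerivAt (fun s => ∑ a, m a * ⟪q s a, v s a⟫) (2 * kinE m (v t) - potU G m (q t)) t := by
  obtain ⟨-, hq, hv⟩ := hsol t ht
  choose acc hacc hnewton using hv
  refine (HasDerivAt.fun_sum fun a _ => ((hq a).inner ℝ (hacc a)).const_mul (m a)).congr_deriv ?_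
  have hforce : ∀ a, m a * ⟪q t a, acc a⟫ = ⟪q t a, newtonForce G m (q t) a⟫ := fun a => by
    rw [newtonForce, ← hnewton a, real_inner_smul_right]
  simp only [mul_add, sum_add_distrib, hforce, sum_inner_newtonForce, real_inner_self_eq_norm_sq,
    kinE]
  ring

theorem IsSolutionOn.continuous_kinE {N : ℕ} {G : ℝ} {m : Fin N → ℝ} {q v : ℝ → Config N}
    (hsol : IsSolutionOn G m Set.univ q v) : Continuous fun t => kinE m (v t) := by
  have hv : ∀ a, Continuous fun t => v t a := fun a =>
    continuous_iff_continuousAt.2 fun t =>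
      let ⟨_, hacc, _⟩ := (hsol t trivial).2.2 a
      hacc.continuousAt
  unfold kinE
  fun_prop

section Masses

variable {N : ℕ} {m : Fin N → ℝ}

theorem kinE_nonneg (hm : ∀ a, 0 ≤ m a) (v : Config N) : 0 ≤ kinE m v := by
  unfold kinE
  have := sum_nonneg fun a (_ : a ∈ univ) => mul_nonneg (hm a) (sq_nonneg ‖v a‖)
  positivity

theorem mul_norm_sq_le_momI (hm : ∀ a, 0 ≤ m a) (q : Config N) (a : Fin N) :
    m a * ‖q a‖ ^ 2 ≤ momI m q :=
  single_le_sum (f := fun a => m a * ‖q a‖ ^ 2) (fun b _ => mul_nonneg (hm b) (sq_nonneg _))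
    (mem_univ a)

theorem momI_nonneg (hm : ∀ a, 0 ≤ m a) (q : Config N) : 0 ≤ momI m q :=
  sum_nonneg fun a _ => mul_nonneg (hm a) (sq_nonneg _)

theorem norm_le_sqrt_of_momI_le (hm : ∀ a, 0 < m a) {q : Config N} {M : ℝ} (hM : momI m q ≤ M)
    (a : Fin N) : ‖q a‖ ≤ √(M / m a) := by
  refine Real.le_sqrt_of_sq_le ?_
  rw [le_div_iff₀ (hm a), mul_comm]
  exact (mul_norm_sq_le_momI (fun b => (hm b).le) q a).trans hM

theorem mul_div_norm_sub_le_potU {G : ℝ} (hG : 0 ≤ G) (hm : ∀ a, 0 ≤ m a) (q : Config N)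
    {a b : Fin N} (hab : a < b) : G * (m a * m b / ‖q a - q b‖) ≤ potU G m q := by
  have hterm : ∀ a b : Fin N, 0 ≤ if a < b then m a * m b / ‖q a - q b‖ else 0 := fun a b => by
    split_ifs
    exacts [div_nonneg (mul_nonneg (hm a) (hm b)) (norm_nonneg _), le_rfl]
  refine mul_le_mul_of_nonneg_left ?_ hG
  calc m a * m b / ‖q a - q b‖ = if a < b then m a * m b / ‖q a - q b‖ else 0 := (if_pos hab).symm
    _ ≤ ∑ b, if a < b then m a * m b / ‖q a - q b‖ else 0 :=
        single_le_sum (fun b _ => hterm a b) (mem_univ b)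
    _ ≤ _ := single_le_sum (fun a _ => sum_nonneg fun b _ => hterm a b) (mem_univ a)

end Masses

theorem exists_pos_le_potU {N : ℕ} (hN : 2 ≤ N) {G : ℝ} (hG : 0 < G) {m : Fin N → ℝ}
    (hm : ∀ a, 0 < m a) {q : ℝ → Config N} (hcf : ∀ t, CollisionFree (q t)) {M : ℝ}
    (hM : ∀ t, momI m (q t) ≤ M) : ∃ c > 0, ∀ t, c ≤ potU G m (q t) := by
  let a₀ : Fin N := ⟨0, by omega⟩
  let a₁ : Fin N := ⟨1, by omega⟩
  have h01 : a₀ < a₁ := Fin.mk_lt_mk.2 zero_lt_one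
  set R := √(M / m a₀) + √(M / m a₁)
  have hdist_pos : ∀ t, 0 < ‖q t a₀ - q t a₁‖ := fun t =>
    norm_pos_iff.2 (sub_ne_zero.2 (hcf t a₀ a₁ h01.ne))
  have hdist_le : ∀ t, ‖q t a₀ - q t a₁‖ ≤ R := fun t =>
    (norm_sub_le _ _).trans (add_le_add (norm_le_sqrt_of_momI_le hm (hM t) a₀)
      (norm_le_sqrt_of_momI_le hm (hM t) a₁))
  have hR : 0 < R := (hdist_pos 0).trans_le (hdist_le 0)
  refine ⟨G * (m a₀ * m a₁ / R), by have := hm a₀; have := hm a₁; positivity, fun t => ?_⟩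
  calc G * (m a₀ * m a₁ / R) ≤ G * (m a₀ * m a₁ / ‖q t a₀ - q t a₁‖) := by
        have := hm a₀; have := hm a₁
        gcongr
        exacts [hdist_pos t, hdist_le t]
    _ ≤ potU G m (q t) := mul_div_norm_sub_le_potU hG.le (fun a => (hm a).le) (q t) h01

/-- Virial theorem for bounded solutions: if a solution defined
for all time has bounded moment of inertia, then the time averages of `K` and
`U` exist and satisfy `2⟨K⟩ = ⟨U⟩ = -2E`, and the energy `E` is negative. -/
theorem virial_bounded
    (N : ℕ) (hN : 2 ≤ N) (G : ℝ) (hG : 0 < G)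
    (m : Fin N → ℝ) (hm : ∀ a, 0 < m a)
    (q v : ℝ → Config N)
    (hsol : IsSolutionOn G m Set.univ q v)
    (E : ℝ) (hE : ∀ t : ℝ, kinE m (v t) - potU G m (q t) = E)
    (hbdd : ∃ M : ℝ, ∀ t : ℝ, momI m (q t) ≤ M) :
    Tendsto (fun T : ℝ => (1 / (2 * T)) * ∫ t in (-T)..T, kinE m (v t))
      atTop (nhds (-E)) ∧
    Tendsto (fun T : ℝ => (1 / (2 * T)) * ∫ t in (-T)..T, potU G m (q t))
      atTop (nhds (-2 * E)) ∧
    E < 0 := by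
  obtain ⟨M, hM⟩ := hbdd
  have hm₀ : ∀ a, 0 ≤ m a := fun a => (hm a).le
  have hK := hsol.continuous_kinE
  have hD : ∀ t, HasDerivAt (fun s => ∑ a, m a * ⟪q s a, v s a⟫) (kinE m (v t) + E) t :=
    fun t => (hsol.hasDerivAt_sum_mul_inner (Set.mem_univ t)).congr_deriv (by linarith [hE t])
  have hD_bdd := abs_le_of_hasDerivAt_of_mem_Icc (abs_nonneg E) (L := 0) (M := M / 2)
    (fun t => ((hasDerivAt_momI m (hsol t trivial).2.1).div_const 2).congr_deriv (by ring)) hD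
    (fun t => by linarith [kinE_nonneg hm₀ (v t), neg_abs_le E])
    (fun t => ⟨by linarith [momI_nonneg hm₀ (q t)], by linarith [hM t]⟩)
  have hKE := tendsto_timeAverage_of_hasDerivAt hD (hK.add continuous_const) hD_bdd
  have hKavg : Tendsto (timeAverage fun t => kinE m (v t)) atTop (𝓝 (-E)) := by
    simpa using hKE.timeAverage_add_const (hK.add continuous_const) (-E)
  have hU : (fun t => potU G m (q t)) = fun t => kinE m (v t) + -E :=
    funext fun t => by linarith [hE t]
  have hUavg : Tendsto (timeAverage fun t => potU G m (q t)) atTop (𝓝 (-2 * E)) := by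
    rw [hU, show -2 * E = -E + -E by ring]
    exact hKavg.timeAverage_add_const hK (-E)
  obtain ⟨c, hc, hcU⟩ := exists_pos_le_potU hN hG hm (fun t => (hsol t trivial).1) hM
  have hc_le : c ≤ -2 * E := ge_of_tendsto hUavg <| by
    filter_upwards [eventually_gt_atTop 0] with T hT
    exact le_timeAverage (hU ▸ hK.add continuous_const) hcU hT
  exact ⟨hKavg, hUavg, by linarith⟩
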